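/- arXiv:1905.06447 — 5 statements merged into one kernel-verified Lean document; each statement's English description precedes it below -/
import Mathlib

section
/- Let q be an odd prime and a a nonsquare in F_q. The group T = F_q ∪ {∞} with operation t1 * t2 = (t1·t2 + a)/(t1 + t2) (and ∞ as identity, t1 * t2 = ∞ when t1 + t2 = 0) is cyclic of order q + 1. -/
/-- The operation on `T = F_q ∪ {∞}` (with `∞ = none`) given by
`t₁ * t₂ = (t₁t₂ + a)/(t₁ + t₂)` when `t₁ + t₂ ≠ 0`, `∞` when `t₁ + t₂ = 0`,
and with `∞` as identity. -/
def Tmul {q : ℕ} [Fact q.Prime] (a : ZMod q) :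
    Option (ZMod q) → Option (ZMod q) → Option (ZMod q)
  | none, t => t
  | some t, none => some t
  | some t1, some t2 => if t1 + t2 = 0 then none else some ((t1 * t2 + a) / (t1 + t2))

/-! Adjoin a square root `s` of the nonsquare `a`. The Cayley transform `t ↦ (t + s) / (t - s)`,
`∞ ↦ 1`, turns `Tmul a` into multiplication because `s ^ 2 = a`, and it is injective. Frobenius
fixes `t` and, by Euler's criterion, sends `s` to `-s`, so it inverts the transform: the image
consists of `(q + 1)`-th roots of unity. There are at most `q + 1` of those, so the transform is a
bijection onto the group of `(q + 1)`-th roots of unity of a field, which is cyclic. -/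

theorem exists_commGroup_of_equiv_isCyclic {α H : Type*} [CommGroup H] [IsCyclic H]
    (e : α ≃ H) (op : α → α → α) (one : α) (he : ∀ x y, e (op x y) = e x * e y)
    (h_one : e one = 1) :
    ∃ G : CommGroup α, (∀ x y, G.mul x y = op x y) ∧ G.one = one ∧
      @IsCyclic _ (@ZPow.toPow _ G.toGroup.toDivInvMonoid.toZPow) := by
  let G : CommGroup α := e.commGroup
  refine ⟨G, fun x y => e.symm_apply_eq.mpr (he x y).symm, e.symm_apply_eq.mpr h_one.symm, ?_⟩
  exact isCyclic_of_surjective e.mulEquiv.symm e.symm.surjective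

section Cayley

variable {F L : Type*} [Field F] [Field L] [Algebra F L] {a : F} {s : L}

theorem algebraMap_ne_of_sq_eq (ha : ¬ IsSquare a) (hs : s ^ 2 = algebraMap F L a) (t : F) :
    algebraMap F L t ≠ s := by
  rintro rfl
  exact ha ⟨t, (algebraMap F L).injective (by rw [← hs, map_mul, sq])⟩

theorem algebraMap_sub_ne_zero (ha : ¬ IsSquare a) (hs : s ^ 2 = algebraMap F L a) (t : F) :
    algebraMap F L t - s ≠ 0 :=
  sub_ne_zero.mpr (algebraMap_ne_of_sq_eq ha hs t)

theorem algebraMap_add_ne_zero (ha : ¬ IsSquare a) (hs : s ^ 2 = algebraMap F L a) (t : F) :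
    algebraMap F L t + s ≠ 0 := by
  simpa using algebraMap_sub_ne_zero ha (s := -s) (by rw [neg_sq, hs]) t

theorem ne_zero_of_sq_eq (ha : ¬ IsSquare a) (hs : s ^ 2 = algebraMap F L a) : s ≠ 0 := by
  simpa using (algebraMap_ne_of_sq_eq ha hs 0).symm

variable (s) in
noncomputable def cayley : Option F → L
  | none => 1
  | some t => (algebraMap F L t + s) / (algebraMap F L t - s)

theorem cayley_some_mul_some_of_add_eq_zero (ha : ¬ IsSquare a) (hs : s ^ 2 = algebraMap F L a)
    {t₁ t₂ : F} (h : t₁ + t₂ = 0) : cayley s (some t₁) * cayley s (some t₂) = 1 := by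
  obtain rfl : t₂ = -t₁ := eq_neg_of_add_eq_zero_right h
  have h₀ : (algebraMap F L t₁ - s) * (-algebraMap F L t₁ - s) ≠ 0 := by
    refine mul_ne_zero (algebraMap_sub_ne_zero ha hs t₁) ?_
    simpa using algebraMap_sub_ne_zero ha hs (-t₁)
  simp only [cayley, map_neg]
  rw [div_mul_div_comm, div_eq_one_iff_eq h₀]
  ring

theorem cayley_some_mul_some (ha : ¬ IsSquare a) (hs : s ^ 2 = algebraMap F L a)
    {t₁ t₂ : F} (h : t₁ + t₂ ≠ 0) : cayley s (some ((t₁ * t₂ + a) / (t₁ + t₂))) =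
      cayley s (some t₁) * cayley s (some t₂) := by
  have h₀ : algebraMap F L (t₁ + t₂) ≠ 0 := (map_ne_zero _).mpr h
  have hm₁ := algebraMap_sub_ne_zero ha hs t₁
  have hm₂ := algebraMap_sub_ne_zero ha hs t₂
  have hm := algebraMap_sub_ne_zero ha hs ((t₁ * t₂ + a) / (t₁ + t₂))
  simp only [cayley, map_div₀, map_add, map_mul] at hm h₀ ⊢
  rw [div_mul_div_comm, div_eq_div_iff hm (mul_ne_zero hm₁ hm₂)]
  field_simp
  linear_combination (2 * s * (algebraMap F L t₁ + algebraMap F L t₂)) * hs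

theorem cayley_some_ne_one (ha : ¬ IsSquare a) (hs : s ^ 2 = algebraMap F L a)
    (h2 : (2 : L) ≠ 0) (t : F) : cayley s (some t) ≠ 1 := by
  rw [cayley, ne_eq, div_eq_one_iff_eq (algebraMap_sub_ne_zero ha hs t)]
  intro h
  exact mul_ne_zero h2 (ne_zero_of_sq_eq ha hs) (by linear_combination h)

theorem cayley_injective (ha : ¬ IsSquare a) (hs : s ^ 2 = algebraMap F L a)
    (hF : ringChar F ≠ 2) : Function.Injective (cayley (F := F) s) := by
  have h2 : (2 : L) ≠ 0 := by
    rw [← map_ofNat (algebraMap F L) 2]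
    exact (map_ne_zero _).mpr (Ring.two_ne_zero hF)
  rintro (_ | t₁) (_ | t₂) h
  · rfl
  · exact absurd h.symm (cayley_some_ne_one ha hs h2 t₂)
  · exact absurd h (cayley_some_ne_one ha hs h2 t₁)
  · simp only [cayley] at h
    rw [div_eq_div_iff (algebraMap_sub_ne_zero ha hs t₁) (algebraMap_sub_ne_zero ha hs t₂)] at h
    have : 2 * s * (algebraMap F L t₁ - algebraMap F L t₂) = 0 := by linear_combination -h
    rw [mul_eq_zero, sub_eq_zero] at this
    exact congrArg some ((algebraMap F L).injective
      (this.resolve_left (mul_ne_zero h2 (ne_zero_of_sq_eq ha hs))))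

theorem ringChar_ne_two_of_not_isSquare [Finite F] (ha : ¬ IsSquare a) : ringChar F ≠ 2 :=
  fun h => ha (FiniteField.isSquare_of_char_two h a)

theorem pow_card_eq_neg_of_sq_eq [Fintype F] (ha : ¬ IsSquare a) (hs : s ^ 2 = algebraMap F L a) :
    s ^ Fintype.card F = -s := by
  have hF := ringChar_ne_two_of_not_isSquare ha
  have ha₀ : a ≠ 0 := by rintro rfl; exact ha ⟨0, by simp⟩
  have euler : a ^ (Fintype.card F / 2) = -1 := (FiniteField.pow_dichotomy hF ha₀).resolve_left
    (mt (FiniteField.isSquare_iff hF ha₀).mpr ha)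
  have hodd : Odd (Fintype.card F) := Nat.odd_iff.mpr (FiniteField.odd_card_of_char_ne_two hF)
  rw [← Nat.two_mul_div_two_add_one_of_odd hodd, pow_succ, pow_mul, hs, ← map_pow, euler]
  simp

theorem cayley_pow_card_add_one [Fintype F] (ha : ¬ IsSquare a) (hs : s ^ 2 = algebraMap F L a)
    (x : Option F) : cayley s x ^ (Fintype.card F + 1) = 1 := by
  rcases x with _ | t
  · simp [cayley]
  have frob : cayley s (some t) ^ Fintype.card F = (cayley s (some t))⁻¹ := by
    simp only [cayley, ← FiniteField.frobeniusAlgHom_apply, map_div₀, map_add, map_sub,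
      AlgHom.commutes]
    simp only [FiniteField.frobeniusAlgHom_apply, pow_card_eq_neg_of_sq_eq ha hs]
    rw [inv_div, sub_neg_eq_add, ← sub_eq_add_neg]
  rw [pow_succ, frob, inv_mul_cancel₀]
  exact div_ne_zero (algebraMap_add_ne_zero ha hs t) (algebraMap_sub_ne_zero ha hs t)

end Cayley

theorem cayley_Tmul {q : ℕ} [Fact q.Prime] {L : Type*} [Field L] [Algebra (ZMod q) L]
    {a : ZMod q} {s : L} (ha : ¬ IsSquare a) (hs : s ^ 2 = algebraMap (ZMod q) L a)
    (x y : Option (ZMod q)) : cayley s (Tmul a x y) = cayley s x * cayley s y := by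
  rcases x with _ | t₁ <;> rcases y with _ | t₂
  · simp [Tmul, cayley]
  · simp [Tmul, cayley]
  · simp [Tmul, cayley]
  · by_cases h : t₁ + t₂ = 0
    · simp only [Tmul, h, if_true]
      exact (cayley_some_mul_some_of_add_eq_zero ha hs h).symm
    · simp only [Tmul, h, if_false]
      exact cayley_some_mul_some ha hs h

theorem Tmul_cyclic_general (q : ℕ) [Fact q.Prime]
    (a : ZMod q) (ha : ¬ IsSquare a) :
    ∃ G : CommGroup (Option (ZMod q)),
      (∀ x y : Option (ZMod q), G.mul x y = Tmul a x y) ∧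
      G.one = none ∧
      (@IsCyclic _ (@ZPow.toPow _ G.toGroup.toDivInvMonoid.toZPow)) ∧
      Nat.card (Option (ZMod q)) = q + 1 := by
  let f := Polynomial.X ^ 2 - Polynomial.C a
  have : Fact (Irreducible f) := ⟨X_pow_sub_C_irreducible_of_prime Nat.prime_two
    fun b hb => ha ⟨b, by rw [← hb, sq]⟩⟩
  have hs : AdjoinRoot.root f ^ 2 = algebraMap (ZMod q) (AdjoinRoot f) a := by
    simpa [f, sub_eq_zero] using AdjoinRoot.aeval_eq (f := f) f
  have hcard : Nat.card (Option (ZMod q)) = q + 1 := by simp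
  let φ : Option (ZMod q) → rootsOfUnity (q + 1) (AdjoinRoot f) := fun x =>
    rootsOfUnity.mkOfPowEq _ (ZMod.card q ▸ cayley_pow_card_add_one ha hs x)
  have hφ : Function.Bijective φ := by
    refine Function.Injective.bijective_of_nat_card_le (fun x y h => ?_) ?_
    · exact cayley_injective ha hs (ringChar_ne_two_of_not_isSquare ha)
        (by simpa [φ] using congrArg (fun u : rootsOfUnity (q + 1) (AdjoinRoot f) =>
          ((u : (AdjoinRoot f)ˣ) : AdjoinRoot f)) h)
    · exact hcard ▸ card_rootsOfUnity _ _
  obtain ⟨G, hmul, hone, hcyc⟩ := exists_commGroup_of_equiv_isCyclic (Equiv.ofBijective φ hφ)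
    (Tmul a) none (fun x y => by ext; simp [φ, cayley_Tmul ha hs]) (by ext; simp [φ, cayley])
  exact ⟨G, hmul, hone, hcyc, hcard⟩

/-- For `q` an odd prime and `a` a nonsquare in `F_q`, the group
`T = F_q ∪ {∞}` with operation `Tmul a` and identity `∞` is cyclic of order `q + 1`. -/
theorem Tmul_cyclic (q : ℕ) [Fact q.Prime] (hq : Odd q)
    (a : ZMod q) (ha : ¬ IsSquare a) :
    ∃ G : CommGroup (Option (ZMod q)),
      (∀ x y : Option (ZMod q), G.mul x y = Tmul a x y) ∧
      G.one = none ∧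
      (@IsCyclic _ (@ZPow.toPow _ G.toGroup.toDivInvMonoid.toZPow)) ∧
      Nat.card (Option (ZMod q)) = q + 1 :=
  Tmul_cyclic_general q a ha
end

section
/- Let q be an odd prime and a a nonzero square in F_q, say a = s^2. Then the map t ↦ (t + s)/(t - s) is a group isomorphism from the group T = {t in F_q : t^2 ≠ a} ∪ {∞} with operation t1 * t2 = (t1·t2 + a)/(t1 + t2) (identity ∞) onto the multiplicative group F_q^×. -/
/-- For `q` an odd prime and `a = s²` a nonzero square in `F_q`, the map
`t ↦ (t + s)/(t - s)` (and `∞ ↦ 1`) is a group isomorphism from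
`T = {t ∈ F_q : t² ≠ a} ∪ {∞}` with operation `Tmul a` and identity `∞`
onto the multiplicative group `F_q^×`. -/
theorem Tmul_iso_units (q : ℕ) [Fact q.Prime] (hq : Odd q)
    (s : ZMod q) (hs : s ≠ 0) (a : ZMod q) (ha : a = s ^ 2) :
    letI T : Set (Option (ZMod q)) := insert none {x | ∃ t : ZMod q, x = some t ∧ t ^ 2 ≠ a}
    letI φ : Option (ZMod q) → ZMod q := fun x => x.elim 1 (fun t => (t + s) / (t - s))
    Set.BijOn φ T {u : ZMod q | u ≠ 0} ∧
    ∀ x ∈ T, ∀ y ∈ T, Tmul a x y ∈ T ∧ φ (Tmul a x y) = φ x * φ y := by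
  subst ha
  set T : Set (Option (ZMod q)) := insert none {x | ∃ t : ZMod q, x = some t ∧ t ^ 2 ≠ s ^ 2} with hT
  set φ : Option (ZMod q) → ZMod q := fun x => x.elim 1 (fun t => (t + s) / (t - s)) with hφ
  have hprime : q.Prime := Fact.out
  have h2 : (2 : ZMod q) ≠ 0 := by
    intro h
    have : ((2 : ℕ) : ZMod q) = 0 := by exact_mod_cast h
    rw [ZMod.natCast_eq_zero_iff] at this
    have := (Nat.prime_dvd_prime_iff_eq hprime Nat.prime_two).mp this
    rw [this] at hq
    exact (Nat.not_odd_iff_even.mpr even_two) hq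
  have hne : ∀ t : ZMod q, t ^ 2 ≠ s ^ 2 ↔ t - s ≠ 0 ∧ t + s ≠ 0 := by
    intro t
    rw [← sub_ne_zero]
    have : t ^ 2 - s ^ 2 = (t - s) * (t + s) := by ring
    rw [this, mul_ne_zero_iff]
  have hmem : ∀ t : ZMod q, some t ∈ T ↔ t - s ≠ 0 ∧ t + s ≠ 0 := by
    intro t
    constructor
    · rintro (h | ⟨t', ht', h⟩)
      · simp at h
      · rw [Option.some_inj] at ht'; subst ht'; exact (hne t).mp h
    · intro h
      exact Or.inr ⟨t, rfl, (hne t).mpr h⟩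
  have hφn : φ none = 1 := rfl
  have hφs : ∀ t : ZMod q, φ (some t) = (t + s) / (t - s) := fun t => rfl
  constructor
  · refine ⟨?_, ?_, ?_⟩
    · rintro x hx
      match x with
      | none => simp [hφn]
      | some t =>
        obtain ⟨h1, h2'⟩ := (hmem t).mp hx
        simp only [hφs, Set.mem_setOf_eq]
        exact div_ne_zero h2' h1
    · rintro x hx y hy hxy
      match x, y with
      | none, none => rfl
      | none, some t =>
        exfalso
        obtain ⟨h1, _⟩ := (hmem t).mp hy
        rw [hφn, hφs, eq_div_iff h1, one_mul] at hxy
        have h2s0 : 2 * s = 0 := by linear_combination -hxy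
        exact hs ((mul_eq_zero.mp h2s0).resolve_left h2)
      | some t, none =>
        exfalso
        obtain ⟨h1, _⟩ := (hmem t).mp hx
        rw [hφn, hφs, div_eq_one_iff_eq h1] at hxy
        apply h2
        have : 2 * s = 0 := by linear_combination hxy
        exact (mul_eq_zero.mp this).resolve_right hs
      | some t1, some t2 =>
        obtain ⟨h1, _⟩ := (hmem t1).mp hx
        obtain ⟨h1', _⟩ := (hmem t2).mp hy
        rw [hφs, hφs, div_eq_div_iff h1 h1'] at hxy
        congr 1
        have h2s : 2 * s ≠ 0 := mul_ne_zero h2 hs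
        have : 2 * s * t1 = 2 * s * t2 := by linear_combination -hxy
        exact mul_left_cancel₀ h2s this
    · rintro u hu
      simp only [Set.mem_setOf_eq] at hu
      by_cases hu1 : u = 1
      · exact ⟨none, Or.inl rfl, by rw [hφn, hu1]⟩
      · have hu1' : u - 1 ≠ 0 := sub_ne_zero.mpr hu1
        refine ⟨some (s * (u + 1) / (u - 1)), ?_, ?_⟩
        · have e1 : s * (u + 1) / (u - 1) - s = 2 * s / (u - 1) := by
            field_simp; ring
          have e2 : s * (u + 1) / (u - 1) + s = 2 * (s * u) / (u - 1) := by
            field_simp; ring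
          exact (hmem _).mpr ⟨by rw [e1]; exact div_ne_zero (mul_ne_zero h2 hs) hu1',
            by rw [e2]; exact div_ne_zero (mul_ne_zero h2 (mul_ne_zero hs hu)) hu1'⟩
        · have e1 : s * (u + 1) / (u - 1) - s = 2 * s / (u - 1) := by
            field_simp; ring
          have e2 : s * (u + 1) / (u - 1) + s = 2 * (s * u) / (u - 1) := by
            field_simp; ring
          rw [hφs, e2, e1, div_div_div_cancel_right₀ hu1',
            div_eq_iff (mul_ne_zero h2 hs)]
          ring
  · rintro x hx y hy
    match x, y with
    | none, y =>
      exact ⟨hy, by rw [show Tmul (s ^ 2) none y = y from rfl, hφn, one_mul]⟩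
    | some t, none =>
      refine ⟨hx, ?_⟩
      simp [Tmul, hφn]
    | some t1, some t2 =>
      obtain ⟨ha1, hb1⟩ := (hmem t1).mp hx
      obtain ⟨ha2, hb2⟩ := (hmem t2).mp hy
      by_cases h12 : t1 + t2 = 0
      · have key : Tmul (s ^ 2) (some t1) (some t2) = none := by
          simp [Tmul, h12]
        refine ⟨by rw [key]; exact Set.mem_insert _ _, ?_⟩
        rw [key, hφn, hφs, hφs, div_mul_div_comm, eq_comm,
          div_eq_one_iff_eq (mul_ne_zero ha1 ha2)]
        have ht2 : t2 = -t1 := by linear_combination h12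
        subst ht2
        ring
      · have key : Tmul (s ^ 2) (some t1) (some t2) = some ((t1 * t2 + s ^ 2) / (t1 + t2)) := by
          simp [Tmul, h12]
        set t3 := (t1 * t2 + s ^ 2) / (t1 + t2) with ht3
        have e3 : t3 - s = (t1 - s) * (t2 - s) / (t1 + t2) := by
          rw [ht3]; field_simp; ring
        have e4 : t3 + s = (t1 + s) * (t2 + s) / (t1 + t2) := by
          rw [ht3]; field_simp; ring
        have h3s : t3 - s ≠ 0 := by
          rw [e3]; exact div_ne_zero (mul_ne_zero ha1 ha2) h12
        have h3s' : t3 + s ≠ 0 := by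
          rw [e4]; exact div_ne_zero (mul_ne_zero hb1 hb2) h12
        refine ⟨by rw [key]; exact (hmem t3).mpr ⟨h3s, h3s'⟩, ?_⟩
        rw [key, hφs, hφs, hφs, e3, e4, div_div_div_cancel_right₀ h12, div_mul_div_comm]
end

section
/- Let q be an odd prime and a a nonsquare in F_q. Under the group operation t1 * t2 = (t1·t2 + a)/(t1+t2) on T = F_q ∪ {∞} (identity ∞), every element t of F_q satisfies t^{*(q+1)} = ∞, i.e., the (q+1)-fold product of t with itself is the identity. -/
/-- `Tpow a t k` is the `k`-fold product `t * t * ⋯ * t` in `(T, Tmul a)`,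
with `Tpow a t 0 = ∞` the identity. -/
def Tpow {q : ℕ} [Fact q.Prime] (a : ZMod q) (t : Option (ZMod q)) : ℕ → Option (ZMod q)
  | 0 => none
  | k + 1 => Tmul a t (Tpow a t k)

/-!
Writing `t ∈ F_q` as the class of `t + √a` in `F_q(√a)ˣ / F_qˣ` and `∞` as the class of `1`
turns `Tmul a` into multiplication, so `t^{*k}` is read off `(t + √a)^k`. Frobenius fixes
`F_q` and sends `√a` to `a^{(q-1)/2} √a = -√a` by Euler's criterion, hence
`(t + √a)^(q+1) = (t - √a)(t + √a) = t² - a ∈ F_q`, which is `∞`.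
-/

namespace QuadraticAlgebra

instance {R : Type*} [CommRing R] {a b : R} (p : ℕ) [CharP R p] :
    CharP (QuadraticAlgebra R a b) p :=
  charP_of_injective_algebraMap algebraMap_injective p

variable {p : ℕ} [Fact p.Prime] {a : ZMod p}

theorem omega_pow_char (hp : Odd p) (ha : ¬IsSquare a) :
    (ω : QuadraticAlgebra (ZMod p) a 0) ^ p = -ω := by
  have ha0 : a ≠ 0 := by rintro rfl; exact ha ⟨0, by simp⟩
  have heuler : a ^ (p / 2) = -1 :=
    (ZMod.pow_div_two_eq_neg_one_or_one p ha0).resolve_left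
      fun h => ha ((ZMod.euler_criterion p ha0).mpr h)
  calc (ω : QuadraticAlgebra (ZMod p) a 0) ^ p = (ω * ω) ^ (p / 2) * ω := by
        rw [← sq, ← pow_mul, ← pow_succ, Nat.two_mul_div_two_add_one_of_odd hp]
    _ = -ω := by
        rw [omega_mul_omega_eq_algebraMap, map_zero, zero_mul, add_zero, ← map_pow, heuler]
        simp

theorem pow_char_eq_star (hp : Odd p) (ha : ¬IsSquare a) (z : QuadraticAlgebra (ZMod p) a 0) :
    z ^ p = star z := by
  rw [← mk_eta z, mk_eq_add_smul_omega, add_pow_char, smul_pow, ← map_pow, ZMod.pow_card,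
    ZMod.pow_card, omega_pow_char hp ha]
  ext <;> simp

end QuadraticAlgebra

open QuadraticAlgebra

/-- Homogeneous coordinates on `F_q(√a)ˣ / F_qˣ`: the class of `x + y√a` is `x / y`, or `∞`
when `y = 0`. -/
def toT {K : Type*} [Field K] [DecidableEq K] {a : K} (z : QuadraticAlgebra K a 0) : Option K :=
  if z.im = 0 then none else some (z.re / z.im)

section

variable {q : ℕ} [Fact q.Prime] {a : ZMod q}

theorem Tmul_some_toT (t : ZMod q) {z : QuadraticAlgebra (ZMod q) a 0} (hz : z ≠ 0) :
    Tmul a (some t) (toT z) = toT (⟨t, 1⟩ * z) := by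
  by_cases him : z.im = 0
  · have hre : z.re ≠ 0 := fun hre => hz (QuadraticAlgebra.ext hre him)
    simp [toT, Tmul, him, hre]
  · simp only [toT, if_neg him, Tmul, re_mul, im_mul]
    have him_mul : t * z.im + 1 * z.re + 0 * 1 * z.im = (t + z.re / z.im) * z.im := by
      field_simp; ring
    simp only [him_mul, mul_eq_zero, him, or_false]
    split_ifs
    · rfl
    · congr 1
      field_simp

theorem Tpow_some_eq_toT_pow {t : ZMod q} (ht : t ^ 2 ≠ a) (k : ℕ) :
    Tpow a (some t) k = toT ((⟨t, 1⟩ : QuadraticAlgebra (ZMod q) a 0) ^ k) := by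
  have hnorm : norm (⟨t, 1⟩ : QuadraticAlgebra (ZMod q) a 0) ≠ 0 := by
    rw [norm_def]; intro h; apply ht; linear_combination h
  induction k with
  | zero => simp [Tpow, toT]
  | succ k ih =>
    have hk : (⟨t, 1⟩ : QuadraticAlgebra (ZMod q) a 0) ^ k ≠ 0 := fun h0 =>
      pow_ne_zero k hnorm (by rw [← map_pow, h0, QuadraticAlgebra.norm_zero])
    rw [Tpow, ih, Tmul_some_toT t hk, pow_succ']

end

/-- For `q` an odd prime and `a` a nonsquare in `F_q`, every element `t ∈ F_q` of the
group `T = F_q ∪ {∞}` satisfies `t^{*(q+1)} = ∞`. -/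
theorem Tpow_card_add_one (q : ℕ) [Fact q.Prime] (hq : Odd q)
    (a : ZMod q) (ha : ¬ IsSquare a) (t : ZMod q) :
    Tpow a (some t) (q + 1) = none := by
  have ht : t ^ 2 ≠ a := fun h => ha ⟨t, by rw [← h, sq]⟩
  rw [Tpow_some_eq_toT_pow ht, toT, if_pos]
  rw [pow_succ, pow_char_eq_star hq ha, mul_comm, ← algebraMap_norm_eq_mul_star,
    algebraMap_im]
end

section
/- Let q be an odd prime and a a nonsquare in F_q. The map sending t in F_q to the class of (t + s)/(t − s) in the group of norm-1 elements of F_{q^2}^× (where s is a square root of a in F_{q^2}), and ∞ to 1, is a group isomorphism from the group T = F_q ∪ {∞} with operation t1 * t2 = (t1·t2 + a)/(t1 + t2) onto the kernel of the norm map N: F_{q^2}^× → F_q^×. -/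
/-- Any element of `K` fixed by `x ↦ x ^ q` lies in the image of the prime field. -/
lemma fixed_mem_range (q : ℕ) [Fact q.Prime] (K : Type*) [Field K] [Algebra (ZMod q) K]
    (x : K) (hx : x ^ q = x) : x ∈ Set.range (algebraMap (ZMod q) K) := by
  classical
  have hq2 : 2 ≤ q := (Fact.out : q.Prime).two_le
  set i := algebraMap (ZMod q) K with hi
  have inj : Function.Injective i := (algebraMap (ZMod q) K).injective
  by_contra hxn
  set p : Polynomial K := Polynomial.X ^ q - Polynomial.X with hp
  have hpne : p ≠ 0 := by
    intro h
    have hc : p.coeff q = 1 := by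
      simp [hp, Polynomial.coeff_X_pow, Polynomial.coeff_X]
      omega
    rw [h] at hc
    simp at hc
  have hdeg : p.natDegree ≤ q := by
    refine le_trans (Polynomial.natDegree_sub_le _ _) ?_
    simp
    omega
  have hroot : ∀ y : K, y ^ q = y → y ∈ p.roots.toFinset := by
    intro y hy
    rw [Multiset.mem_toFinset, Polynomial.mem_roots hpne]
    simp [hp, Polynomial.IsRoot, hy]
  set T : Finset K := Finset.univ.image i with hT
  have hsub : insert x T ⊆ p.roots.toFinset := by
    intro y hy
    rcases Finset.mem_insert.mp hy with h | h
    · exact h ▸ hroot x hx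
    · rcases Finset.mem_image.mp h with ⟨t, _, rfl⟩
      refine hroot _ ?_
      rw [← map_pow, ZMod.pow_card]
  have hxT : x ∉ T := by
    intro h
    rcases Finset.mem_image.mp h with ⟨t, _, rfl⟩
    exact hxn ⟨t, rfl⟩
  have hcard : q + 1 ≤ p.roots.toFinset.card := by
    have h1 : (insert x T).card = q + 1 := by
      rw [Finset.card_insert_of_notMem hxT, hT,
        Finset.card_image_of_injective _ inj, Finset.card_univ, ZMod.card]
    rw [← h1]
    exact Finset.card_le_card hsub
  have : p.roots.toFinset.card ≤ q :=
    le_trans (Multiset.toFinset_card_le _) (le_trans (Polynomial.card_roots' p) hdeg)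
  omega

/-- Let `q` be an odd prime, `a` a nonsquare in `F_q`, `K` a field with `q²` elements
containing `F_q`, and `s ∈ K` with `s² = a`. The map `t ↦ (t + s)/(t - s)` (and `∞ ↦ 1`)
is a group isomorphism from `T = F_q ∪ {∞}` with operation `Tmul a` onto the kernel of
the norm map `N : K^× → F_q^×`, `N(x) = x·x^q`, i.e. onto `{x ∈ K : x·x^q = 1}`. -/
theorem Tmul_iso_norm_one (q : ℕ) [Fact q.Prime] (hq : Odd q)
    (a : ZMod q) (ha : ¬ IsSquare a)
    (K : Type*) [Field K] [Fintype K] [Algebra (ZMod q) K]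
    (hK : Fintype.card K = q ^ 2)
    (s : K) (hs : s ^ 2 = algebraMap (ZMod q) K a) :
    letI φ : Option (ZMod q) → K := fun x =>
      x.elim 1 (fun t => (algebraMap (ZMod q) K t + s) / (algebraMap (ZMod q) K t - s))
    Set.BijOn φ Set.univ {x : K | x * x ^ q = 1} ∧
    ∀ x y : Option (ZMod q), φ (Tmul a x y) = φ x * φ y := by
  set φ : Option (ZMod q) → K := fun x =>
    x.elim 1 (fun t => (algebraMap (ZMod q) K t + s) / (algebraMap (ZMod q) K t - s)) with hφdef
  have hqp : q.Prime := Fact.out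
  set i := algebraMap (ZMod q) K with hi
  have inj : Function.Injective i := (algebraMap (ZMod q) K).injective
  have charK : CharP K q := charP_of_injective_algebraMap inj q
  have hφn : φ none = 1 := rfl
  have hφs : ∀ t : ZMod q, φ (some t) = (i t + s) / (i t - s) := fun t => rfl
  -- basic nonvanishing facts
  have two_ne : (2 : K) ≠ 0 := by
    have h2 : (2 : ZMod q) ≠ 0 := by
      intro h
      have : (q : ℕ) ∣ 2 := by
        have := (ZMod.natCast_eq_zero_iff 2 q).mp (by exact_mod_cast h)
        exact this
      have := Nat.le_of_dvd (by norm_num) this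
      have h2q : 2 ≤ q := hqp.two_le
      have hodd := Nat.odd_iff.mp hq
      omega
    have h3 : i 2 ≠ 0 := fun h => h2 (inj (by simpa using h))
    rwa [map_ofNat] at h3
  have hne : ∀ t : ZMod q, i t ≠ s := by
    intro t h
    apply ha
    refine ⟨t, ?_⟩
    have : i (t * t) = i a := by
      rw [map_mul, h, ← hs]; ring
    exact (inj this).symm
  have hne' : ∀ t : ZMod q, i t ≠ -s := by
    intro t h
    apply hne (-t)
    rw [map_neg, h, neg_neg]
  have hsne : s ≠ 0 := by
    intro h
    exact hne 0 (by simp [h])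
  have htms : ∀ t : ZMod q, i t - s ≠ 0 := fun t => sub_ne_zero.mpr (hne t)
  have htps : ∀ t : ZMod q, i t + s ≠ 0 := by
    intro t h
    exact hne' t (by linear_combination h)
  -- Frobenius facts
  have frob : ∀ x y : K, (x + y) ^ q = x ^ q + y ^ q := fun x y => add_pow_char x y q
  have frob_sub : ∀ x y : K, (x - y) ^ q = x ^ q - y ^ q := fun x y => sub_pow_char x y
  have hiq : ∀ t : ZMod q, (i t) ^ q = i t := by
    intro t; rw [← map_pow, ZMod.pow_card]
  have hsq : s ^ q = -s := by
    have h2 : (s ^ q) ^ 2 = s ^ 2 := by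
      rw [← pow_mul, mul_comm, pow_mul, hs, ← map_pow, ZMod.pow_card]
    have hz : (s ^ q - s) * (s ^ q + s) = 0 := by linear_combination h2
    rcases mul_eq_zero.mp hz with h | h
    · exfalso
      have hfix : s ^ q = s := by linear_combination h
      rcases fixed_mem_range q K s hfix with ⟨t, ht⟩
      exact hne t ht
    · linear_combination h
  -- norm computation
  have hnorm : ∀ t : ZMod q, φ (some t) * (φ (some t)) ^ q = 1 := by
    intro t
    rw [hφs, div_pow, frob, frob_sub, hiq, hsq, sub_neg_eq_add, ← sub_eq_add_neg,
      div_mul_div_comm, mul_comm (i t + s), div_self (mul_ne_zero (htms t) (htps t))]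
  -- values of φ are never 1 on `some`
  have hφ1 : ∀ t : ZMod q, φ (some t) ≠ 1 := by
    intro t h
    rw [hφs, div_eq_one_iff_eq (htms t)] at h
    apply hsne
    have : (2 : K) * s = 0 := by linear_combination h
    rcases mul_eq_zero.mp this with h' | h'
    · exact absurd h' two_ne
    · exact h'
  constructor
  · refine ⟨?_, ?_, ?_⟩
    · -- MapsTo
      rintro (_ | t) -
      · show (1 : K) * 1 ^ q = 1; simp
      · exact hnorm t
    · -- InjOn
      rintro (_ | t1) - (_ | t2) - h
      · rfl
      · exact absurd h.symm (hφ1 t2)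
      · exact absurd h (hφ1 t1)
      · rw [hφs, hφs, div_eq_div_iff (htms t1) (htms t2)] at h
        have h2 : (2 : K) * s * (i t2 - i t1) = 0 := by linear_combination h
        rcases mul_eq_zero.mp h2 with h' | h'
        · rcases mul_eq_zero.mp h' with h'' | h''
          · exact absurd h'' two_ne
          · exact absurd h'' hsne
        · have : i t1 = i t2 := by linear_combination -h'
          rw [inj this]
    · -- SurjOn
      intro x hx
      simp only [Set.mem_setOf_eq] at hx
      have hx0 : x ≠ 0 := by
        intro h; rw [h] at hx; simp at hx
      by_cases hx1 : x = 1
      · exact ⟨none, Set.mem_univ _, by rw [hφn, hx1]⟩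
      · have hxm1 : x - 1 ≠ 0 := sub_ne_zero.mpr hx1
        have hxq : x ^ q = x⁻¹ := by
          field_simp
          linear_combination hx
        set y : K := s * (x + 1) / (x - 1) with hy
        have hyq : y ^ q = y := by
          rw [hy, div_pow, mul_pow, frob, frob_sub, hsq, hxq, one_pow]
          have h1 : x⁻¹ - 1 ≠ 0 := sub_ne_zero.mpr (fun h => hx1 (inv_eq_one.mp h))
          rw [div_eq_div_iff h1 hxm1]
          field_simp
          ring
        rcases fixed_mem_range q K y hyq with ⟨t, ht⟩
        refine ⟨some t, Set.mem_univ _, ?_⟩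
        rw [hφs, ht]
        have hys : y - s ≠ 0 := by rw [← ht]; exact htms t
        rw [div_eq_iff hys, hy]
        field_simp
        ring
  · -- homomorphism
    rintro (_ | t1) (_ | t2)
    · simp [Tmul, hφn]
    · show φ (some t2) = 1 * φ (some t2); rw [one_mul]
    · show φ (some t1) = φ (some t1) * 1; rw [mul_one]
    · show φ (Tmul a (some t1) (some t2)) = φ (some t1) * φ (some t2)
      rw [Tmul]
      by_cases h : t1 + t2 = 0
      · rw [if_pos h, hφn, hφs, hφs, div_mul_div_comm, eq_comm,
          div_eq_one_iff_eq (mul_ne_zero (htms t1) (htms t2))]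
        have ht2 : i t2 = -i t1 := by
          rw [← map_neg]; exact congrArg i (by linear_combination h)
        rw [ht2]; ring
      · rw [if_neg h, hφs, hφs, hφs]
        have hu : i ((t1 * t2 + a) / (t1 + t2)) = (i t1 * i t2 + s ^ 2) / (i t1 + i t2) := by
          rw [map_div₀, map_add, map_mul, map_add, hs]
        have hAB : i t1 + i t2 ≠ 0 := by
          rw [← map_add]; intro h'; exact h (inj (by simpa using h'))
        have h1 : (i t1 * i t2 + s ^ 2) / (i t1 + i t2) + s
            = (i t1 + s) * (i t2 + s) / (i t1 + i t2) := by
          field_simp; ring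
        have h2 : (i t1 * i t2 + s ^ 2) / (i t1 + i t2) - s
            = (i t1 - s) * (i t2 - s) / (i t1 + i t2) := by
          field_simp; ring
        rw [hu, h1, h2, div_div_div_comm, div_self hAB, div_one, div_mul_div_comm]
end

section
/- Let n be an odd composite integer that is a strong pseudoprime to base 2, with n − 1 = 2^e·m (m odd). Then the 2-adic valuation of ord_p(2) is the same for all prime divisors p of n, where ord_p(2) is the multiplicative order of 2 mod p. -/
lemma spsp_aux (p i m : ℕ) (hp : p.Prime) (hp2 : p ≠ 2) (hm : Odd m)
    (h1 : (2 : ZMod p) ^ (2 ^ i * m) = -1) :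
    padicValNat 2 (orderOf (2 : ZMod p)) = i + 1 := by
  haveI : Fact p.Prime := ⟨hp⟩
  haveI : Fact (2 < p) := ⟨lt_of_le_of_ne hp.two_le (Ne.symm hp2)⟩
  have hne : (-1 : ZMod p) ≠ 1 := ZMod.neg_one_ne_one
  have hm0 : m ≠ 0 := hm.pos.ne'
  set d := orderOf (2 : ZMod p) with hd
  have hdvd : d ∣ 2 ^ (i + 1) * m := by
    apply orderOf_dvd_of_pow_eq_one
    have h2 : 2 ^ (i + 1) * m = (2 ^ i * m) * 2 := by ring
    rw [h2, pow_mul, h1, neg_one_sq]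
  have hnd : ¬ d ∣ 2 ^ i * m := by
    intro h
    exact hne (h1 ▸ (orderOf_dvd_iff_pow_eq_one.mp h).symm ▸ rfl)
  have hd0 : d ≠ 0 := by
    intro h0
    rw [h0, zero_dvd_iff] at hdvd
    simp [hm0] at hdvd
  set a := padicValNat 2 d with ha
  have hpd : 2 ^ a ∣ d := pow_padicValNat_dvd
  set c := d / 2 ^ a with hc
  have hdc : 2 ^ a * c = d := Nat.mul_div_cancel' hpd
  have hcop : Nat.Coprime 2 c := by
    rw [Nat.coprime_two_left, ← Nat.not_even_iff_odd]
    intro hev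
    obtain ⟨k, hk⟩ := (even_iff_two_dvd).mp hev
    have : 2 ^ (a + 1) ∣ d := ⟨k, by rw [← hdc, hk]; ring⟩
    exact pow_succ_padicValNat_not_dvd hd0 this
  have hcm : c ∣ m := by
    have hcdvd : c ∣ 2 ^ (i + 1) * m := dvd_trans ⟨2 ^ a, by rw [← hdc]; ring⟩ hdvd
    exact Nat.Coprime.dvd_of_dvd_mul_left (hcop.symm.pow_right (i+1)) hcdvd
  have hale : a ≤ i + 1 := by
    have h2a : 2 ^ a ∣ 2 ^ (i + 1) * m := dvd_trans hpd hdvd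
    have hcop2 : Nat.Coprime (2 ^ a) m := Nat.Coprime.pow_left _ (Nat.coprime_two_left.mpr hm)
    have : 2 ^ a ∣ 2 ^ (i + 1) := (Nat.Coprime.dvd_of_dvd_mul_right hcop2 h2a)
    exact (Nat.pow_dvd_pow_iff_le_right one_lt_two).mp this
  have hgt : ¬ a ≤ i := by
    intro h
    apply hnd
    calc d = 2 ^ a * c := hdc.symm
      _ ∣ 2 ^ i * m := mul_dvd_mul (pow_dvd_pow 2 h) hcm
  omega

/-- Let `n` be an odd composite strong pseudoprime to base 2, with `n - 1 = 2^e · m`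
(`m` odd). Then the 2-adic valuation of the multiplicative order of `2` mod `p` is the
same for all prime divisors `p` of `n`. -/
theorem spsp_two_equal_valuations (n : ℕ) (hn : Odd n) (hcomp : ¬ n.Prime) (hn1 : 1 < n)
    (e m : ℕ) (hm : Odd m) (hnm : n - 1 = 2 ^ e * m)
    (hspsp : (2 : ZMod n) ^ m = 1 ∨ ∃ i, i < e ∧ (2 : ZMod n) ^ (2 ^ i * m) = -1)
    (p r : ℕ) (hp : p.Prime) (hpn : p ∣ n) (hr : r.Prime) (hrn : r ∣ n) :
    padicValNat 2 (orderOf (2 : ZMod p)) = padicValNat 2 (orderOf (2 : ZMod r)) := by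
  have hodd : ∀ q : ℕ, q.Prime → q ∣ n → q ≠ 2 := by
    intro q hq hqn hq2
    rw [hq2] at hqn
    exact (Nat.not_even_iff_odd.mpr hn) ((even_iff_two_dvd).mpr hqn)
  rcases hspsp with h | ⟨i, hi, h⟩
  · have cast : ∀ q : ℕ, q ∣ n → (2 : ZMod q) ^ m = 1 := by
      intro q hq
      have := congrArg (ZMod.castHom hq (ZMod q)) h
      simp only [map_pow, map_one, map_neg, map_ofNat] at this
      exact this
    have key : ∀ q : ℕ, q.Prime → q ∣ n → padicValNat 2 (orderOf (2 : ZMod q)) = 0 := by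
      intro q hq hqn
      have hdm : orderOf (2 : ZMod q) ∣ m := orderOf_dvd_of_pow_eq_one (cast q hqn)
      have : ¬ 2 ∣ orderOf (2 : ZMod q) := by
        intro hdd
        exact (Nat.not_even_iff_odd.mpr hm) ((even_iff_two_dvd).mpr (hdd.trans hdm))
      exact padicValNat.eq_zero_of_not_dvd this
    rw [key p hp hpn, key r hr hrn]
  · have cast : ∀ q : ℕ, q ∣ n → (2 : ZMod q) ^ (2 ^ i * m) = -1 := by
      intro q hq
      have := congrArg (ZMod.castHom hq (ZMod q)) h
      simp only [map_pow, map_one, map_neg, map_ofNat] at this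
      exact this
    rw [spsp_aux p i m hp (hodd p hp hpn) hm (cast p hpn),
        spsp_aux r i m hr (hodd r hr hrn) hm (cast r hrn)]
end
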